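/- For every k ∈ ℝ³ with k₃ ≠ 0 and k' ≠ 0, the three vectors X_k^0, X_k^{+1}, X_k^{−1} form an orthonormal basis of ℂ³ with respect to the standard Hermitian inner product. -/

import Mathlib

noncomputable section
open scoped Classical

abbrev V3 := Fin 3 → ℝ

/-- Euclidean norm of a vector in ℝ³. -/
def enorm3 (k : V3) : ℝ := Real.sqrt (k 0 ^ 2 + k 1 ^ 2 + k 2 ^ 2)

/-- Horizontal part k' = (k₁, k₂, 0). -/
def horiz (k : V3) : V3 := ![k 0, k 1, 0]

/-- The lattice 𝒵_L of wavevectors. -/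
def ZL (L₁ L₂ L₃ : ℝ) : Set V3 :=
  {k | ∃ n : Fin 3 → ℤ,
    k = ![2 * Real.pi * (n 0 : ℝ) / L₁, 2 * Real.pi * (n 1 : ℝ) / L₂,
          2 * Real.pi * (n 2 : ℝ) / L₃]}

/-- Inertia–gravity frequency ω_k^s = s|k|/k₃. -/
def omg (k : V3) (s : ℝ) : ℝ := s * enorm3 k / k 2

/-- Slow eigenvector X_k^0. -/
def X0 (k : V3) : Fin 3 → ℂ :=
  if horiz k = 0 then ![0, 0, ((Real.sign (k 2) : ℝ) : ℂ)]
  else ![((k 1 / enorm3 k : ℝ) : ℂ), ((-(k 0) / enorm3 k : ℝ) : ℂ), ((k 2 / enorm3 k : ℝ) : ℂ)]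

/-- Fast eigenvectors X_k^s, s = ±1. -/
def Xs (k : V3) (s : ℝ) : Fin 3 → ℂ :=
  if horiz k = 0 then
    ![(((Real.sqrt 2)⁻¹ : ℝ) : ℂ), -Complex.I * s * (((Real.sqrt 2)⁻¹ : ℝ) : ℂ), 0]
  else
    ![(((-(k 1) * k 2 : ℝ) : ℂ) + Complex.I * s * k 0 * enorm3 k) /
        ((Real.sqrt 2 * enorm3 (horiz k) * enorm3 k : ℝ) : ℂ),
      (((k 0 * k 2 : ℝ) : ℂ) + Complex.I * s * k 1 * enorm3 k) /
        ((Real.sqrt 2 * enorm3 (horiz k) * enorm3 k : ℝ) : ℂ),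
      ((enorm3 (horiz k) ^ 2 : ℝ) : ℂ) /
        ((Real.sqrt 2 * enorm3 (horiz k) * enorm3 k : ℝ) : ℂ)]

/-- The incompressible-velocity vector V X_j^r. -/
def VX (j : V3) (r : ℝ) : Fin 3 → ℂ :=
  if horiz j = 0 then Xs j r
  else
    ![(((-(j 1) * j 2 : ℝ) : ℂ) + Complex.I * r * j 0 * enorm3 j) /
        ((Real.sqrt 2 * enorm3 j * enorm3 (horiz j) : ℝ) : ℂ),
      (((j 0 * j 2 : ℝ) : ℂ) + Complex.I * r * j 1 * enorm3 j) /
        ((Real.sqrt 2 * enorm3 j * enorm3 (horiz j) : ℝ) : ℂ),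
      (-Complex.I * r * ((enorm3 (horiz j) ^ 2 * enorm3 j / j 2 : ℝ) : ℂ)) /
        ((Real.sqrt 2 * enorm3 j * enorm3 (horiz j) : ℝ) : ℂ)]

/-- Bilinear pairing a·b on ℂ³. -/
def dotC (a b : Fin 3 → ℂ) : ℂ := a 0 * b 0 + a 1 * b 1 + a 2 * b 2

/-- Pairing of a complex vector with a real vector. -/
def dotR (a : Fin 3 → ℂ) (k : V3) : ℂ :=
  a 0 * (k 0 : ℂ) + a 1 * (k 1 : ℂ) + a 2 * (k 2 : ℂ)

/-- The interaction coefficient B_{jkl}^{rs0}. -/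
def Brs0 (M : ℝ) (j k l : V3) (r s : ℝ) : ℂ :=
  if j + k = l ∧ j 2 * k 2 ≠ 0 ∧ l ≠ 0 then
    Complex.I * M * dotR (VX j r) k * dotC (Xs k s) (X0 l)
  else 0

/-!
Put `v = k'/|k'|` and `u = (-k₂k₃, k₁k₃, |k'|²)/(|k'||k|)`. Together with `w = X_k^0` these are
real orthonormal vectors, and `X_k^{±1} = (u ± i v)/√2`. Complexification preserves inner products,
and `(u, v) ↦ ((u + i v)/√2, (u - i v)/√2)` is a unitary change of basis of their span, so the three
vectors are orthonormal in `ℂ³`, hence a basis.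
-/

open scoped InnerProductSpace

def ofRealVec {ι : Type*} (x : EuclideanSpace ℝ ι) : EuclideanSpace ℂ ι :=
  WithLp.toLp 2 fun i => (x i : ℂ)

theorem inner_ofRealVec {ι : Type*} [Fintype ι] (x y : EuclideanSpace ℝ ι) :
    ⟪ofRealVec x, ofRealVec y⟫_ℂ = (⟪x, y⟫_ℝ : ℂ) := by
  simp [ofRealVec, PiLp.inner_apply]

theorem Orthonormal.ofRealVec {ι κ : Type*} [Fintype κ] {v : ι → EuclideanSpace ℝ κ}
    (h : Orthonormal ℝ v) : Orthonormal ℂ (fun i => ofRealVec (v i)) := by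
  rw [orthonormal_iff_ite] at h ⊢
  intro i j
  rw [inner_ofRealVec, h i j]
  split_ifs <;> simp

open Complex in
theorem Orthonormal.circular {E : Type*} [NormedAddCommGroup E] [InnerProductSpace ℂ E]
    {e : Fin 3 → E} (he : Orthonormal ℂ e) :
    Orthonormal ℂ ![e 0, (Real.sqrt 2 : ℂ)⁻¹ • (e 1 + I • e 2), (Real.sqrt 2 : ℂ)⁻¹ • (e 1 - I • e 2)] := by
  have h := orthonormal_iff_ite.mp he
  have h2 : (Real.sqrt 2 : ℂ) ^ 2 = 2 := by
    rw [← ofReal_pow, Real.sq_sqrt zero_le_two, ofReal_ofNat]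
  rw [orthonormal_iff_ite]
  intro i j
  fin_cases i <;> fin_cases j <;>
    simp only [Fin.zero_eta, Fin.mk_one, Fin.reduceFinMk, Matrix.cons_val_zero, Matrix.cons_val_one,
      Matrix.cons_val_two, Matrix.head_cons, Matrix.tail_cons, inner_add_left, inner_add_right,
      inner_sub_left, inner_sub_right, inner_smul_left, inner_smul_right,
      h, map_inv₀, conj_ofReal, conj_I, Fin.isValue, if_true] <;>
    norm_num [Fin.ext_iff] <;> ring_nf <;> norm_num [I_sq, inv_pow, h2]

theorem enorm3_sq (k : V3) : enorm3 k ^ 2 = k 0 ^ 2 + k 1 ^ 2 + k 2 ^ 2 :=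
  Real.sq_sqrt (by positivity)

theorem enorm3_horiz_sq (k : V3) : enorm3 (horiz k) ^ 2 = k 0 ^ 2 + k 1 ^ 2 := by
  simp [enorm3_sq, horiz]

theorem enorm3_pos {k : V3} (hk : k ≠ 0) : 0 < enorm3 k := by
  refine Real.sqrt_pos.2 (lt_of_le_of_ne (by positivity) fun h => hk ?_)
  ext i
  fin_cases i <;> simp <;> nlinarith [sq_nonneg (k 0), sq_nonneg (k 1), sq_nonneg (k 2)]

theorem ne_zero_of_horiz_ne_zero {k : V3} (hk : horiz k ≠ 0) : k ≠ 0 := by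
  rintro rfl
  exact hk (by ext i; fin_cases i <;> rfl)

def polarizationFrame (k : V3) : Fin 3 → EuclideanSpace ℝ (Fin 3) :=
  ![(enorm3 k)⁻¹ • !₂[k 1, -k 0, k 2],
    (enorm3 (horiz k) * enorm3 k)⁻¹ • !₂[-k 1 * k 2, k 0 * k 2, enorm3 (horiz k) ^ 2],
    (enorm3 (horiz k))⁻¹ • !₂[k 0, k 1, 0]]

theorem polarizationFrame_orthonormal {k : V3} (hk : horiz k ≠ 0) :
    Orthonormal ℝ (polarizationFrame k) := by
  have hn := (enorm3_pos (ne_zero_of_horiz_ne_zero hk)).ne'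
  have hh := (enorm3_pos hk).ne'
  have hn2 := enorm3_sq k
  have hh2 := enorm3_horiz_sq k
  rw [orthonormal_iff_ite]
  intro i j
  simp only [PiLp.inner_apply, Fin.sum_univ_three]
  fin_cases i <;> fin_cases j <;>
    simp only [polarizationFrame, Fin.zero_eta, Fin.mk_one, Fin.reduceFinMk, Matrix.cons_val_zero,
      Matrix.cons_val_one, Matrix.cons_val_two, Matrix.head_cons, Matrix.tail_cons, PiLp.smul_apply,
      smul_eq_mul, RCLike.inner_apply, conj_trivial, Fin.reduceEq, if_false, if_true] <;>
    field_simp <;> grind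

theorem X0_eq_ofRealVec {k : V3} (hk : horiz k ≠ 0) :
    WithLp.toLp 2 (X0 k) = ofRealVec (polarizationFrame k 0) := by
  ext i
  fin_cases i <;> simp [X0, hk, ofRealVec, polarizationFrame, div_eq_inv_mul]

open Complex in
theorem Xs_eq_ofRealVec {k : V3} (hk : horiz k ≠ 0) (s : ℝ) :
    WithLp.toLp 2 (Xs k s) = (Real.sqrt 2 : ℂ)⁻¹ •
      (ofRealVec (polarizationFrame k 1) + (s * I) • ofRealVec (polarizationFrame k 2)) := by
  have hn : (enorm3 k : ℂ) ≠ 0 := by exact_mod_cast (enorm3_pos (ne_zero_of_horiz_ne_zero hk)).ne'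
  have hh : (enorm3 (horiz k) : ℂ) ≠ 0 := by exact_mod_cast (enorm3_pos hk).ne'
  ext i
  fin_cases i <;> simp [Xs, hk, ofRealVec, polarizationFrame] <;> field_simp

theorem Xk_orthonormal_basis_general
    (k : V3) (hk' : horiz k ≠ 0) :
    Orthonormal ℂ
      (![(WithLp.equiv 2 (Fin 3 → ℂ)).symm (X0 k),
         (WithLp.equiv 2 (Fin 3 → ℂ)).symm (Xs k 1),
         (WithLp.equiv 2 (Fin 3 → ℂ)).symm (Xs k (-1))] :
        Fin 3 → EuclideanSpace ℂ (Fin 3)) ∧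
    Submodule.span ℂ
      (Set.range
        (![(WithLp.equiv 2 (Fin 3 → ℂ)).symm (X0 k),
           (WithLp.equiv 2 (Fin 3 → ℂ)).symm (Xs k 1),
           (WithLp.equiv 2 (Fin 3 → ℂ)).symm (Xs k (-1))] :
          Fin 3 → EuclideanSpace ℂ (Fin 3))) = ⊤ := by
  refine (fun h => ⟨h, h.linearIndependent.span_eq_top_of_card_eq_finrank (by simp)⟩) ?_
  simp only [WithLp.equiv_symm_apply, X0_eq_ofRealVec hk', Xs_eq_ofRealVec hk']
  simpa [sub_eq_add_neg] using (polarizationFrame_orthonormal hk').ofRealVec.circular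

/-- for k₃ ≠ 0 and k' ≠ 0, the vectors X_k^0, X_k^{+1}, X_k^{−1}
form an orthonormal basis of ℂ³ for the standard Hermitian inner product. -/
theorem Xk_orthonormal_basis
    (k : V3) (hk3 : k 2 ≠ 0) (hk' : horiz k ≠ 0) :
    Orthonormal ℂ
      (![(WithLp.equiv 2 (Fin 3 → ℂ)).symm (X0 k),
         (WithLp.equiv 2 (Fin 3 → ℂ)).symm (Xs k 1),
         (WithLp.equiv 2 (Fin 3 → ℂ)).symm (Xs k (-1))] :
        Fin 3 → EuclideanSpace ℂ (Fin 3)) ∧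
    Submodule.span ℂ
      (Set.range
        (![(WithLp.equiv 2 (Fin 3 → ℂ)).symm (X0 k),
           (WithLp.equiv 2 (Fin 3 → ℂ)).symm (Xs k 1),
           (WithLp.equiv 2 (Fin 3 → ℂ)).symm (Xs k (-1))] :
          Fin 3 → EuclideanSpace ℂ (Fin 3))) = ⊤ :=
  Xk_orthonormal_basis_general k hk'
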